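/- arXiv:2204.05161 — 2 statements merged into one kernel-verified Lean document; each statement's English description precedes it below -/
import Mathlib

section
/- For all positive integers m and n, ℓ(lcm(m, n)) = lcm(ℓ(m), ℓ(n)), where ℓ(m) := lcm(m, z(m)). -/
/-- The rank of appearance (entry point) of `m` in the Fibonacci sequence. -/
noncomputable def fibZ (m : ℕ) : ℕ := sInf {n | 0 < n ∧ m ∣ Nat.fib n}

/-- `ℓ(m) = lcm(m, z(m))`. -/
noncomputable def ellF (m : ℕ) : ℕ := Nat.lcm m (fibZ m)

private lemma fib_pair_shift (m d : ℕ) :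
    ∀ a, ((Nat.fib (a + d) : ZMod m) = Nat.fib a ∧
          (Nat.fib (a + d + 1) : ZMod m) = Nat.fib (a + 1)) →
      ((Nat.fib d : ZMod m) = Nat.fib 0 ∧
       (Nat.fib (d + 1) : ZMod m) = Nat.fib 1) := by
  intro a
  induction a with
  | zero => simp
  | succ a ih =>
    rintro ⟨h1, h2⟩
    apply ih
    constructor
    · have e1 : Nat.fib (a + d + 2) = Nat.fib (a + d) + Nat.fib (a + d + 1) :=
        Nat.fib_add_two
      have e2 : Nat.fib (a + 2) = Nat.fib a + Nat.fib (a + 1) := Nat.fib_add_two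
      have h1' : (Nat.fib (a + d + 2) : ZMod m) = Nat.fib (a + 2) := by
        have : a + 1 + d + 1 = a + d + 2 := by ring
        rw [this] at h2
        have : a + 1 + 1 = a + 2 := by ring
        rwa [this] at h2
      have h2' : (Nat.fib (a + d + 1) : ZMod m) = Nat.fib (a + 1) := by
        have : a + 1 + d = a + d + 1 := by ring
        rwa [this] at h1
      have := h1'
      rw [e1, e2] at this
      push_cast at this
      have goal : (Nat.fib (a + d) : ZMod m) = Nat.fib a := by
        have h2'' := h2'
        linear_combination this - h2''
      exact goal
    · have : a + 1 + d = a + d + 1 := by ring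
      rwa [this] at h1

/-- Existence of the entry point. -/
private lemma fibZ_exists (m : ℕ) (hm : 0 < m) :
    ∃ k, 0 < k ∧ m ∣ Nat.fib k := by
  haveI : NeZero m := ⟨hm.ne'⟩
  obtain ⟨a, b, hab, h⟩ := Finite.exists_ne_map_eq_of_infinite
    (fun n : ℕ => ((Nat.fib n : ZMod m), (Nat.fib (n + 1) : ZMod m)))
  wlog hlt : a < b generalizing a b
  · exact this b a hab.symm h.symm (by omega)
  set d := b - a with hd
  have hb : b = a + d := by omega
  have hdpos : 0 < d := by omega
  have h1 : (Nat.fib (a + d) : ZMod m) = Nat.fib a := by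
    rw [← hb]; exact congrArg Prod.fst h.symm
  have h2 : (Nat.fib (a + d + 1) : ZMod m) = Nat.fib (a + 1) := by
    rw [← hb]; exact congrArg Prod.snd h.symm
  obtain ⟨hfd, _⟩ := fib_pair_shift m d a ⟨h1, h2⟩
  refine ⟨d, hdpos, ?_⟩
  have : (Nat.fib d : ZMod m) = 0 := by simpa using hfd
  exact (ZMod.natCast_eq_zero_iff _ _).mp this

private lemma fibZ_mem (m : ℕ) (hm : 0 < m) :
    0 < fibZ m ∧ m ∣ Nat.fib (fibZ m) := by
  have h := fibZ_exists m hm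
  exact Nat.sInf_mem (s := {n | 0 < n ∧ m ∣ Nat.fib n}) h

private lemma dvd_fib_iff (m : ℕ) (hm : 0 < m) (k : ℕ) :
    m ∣ Nat.fib k ↔ fibZ m ∣ k := by
  obtain ⟨hz, hdvd⟩ := fibZ_mem m hm
  constructor
  · intro h
    rcases Nat.eq_zero_or_pos k with rfl | hk
    · exact Dvd.intro 0 rfl
    have hg : m ∣ Nat.fib (Nat.gcd (fibZ m) k) := by
      rw [Nat.fib_gcd]
      exact Nat.dvd_gcd hdvd h
    have hgpos : 0 < Nat.gcd (fibZ m) k := Nat.gcd_pos_of_pos_right _ hk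
    have hle : fibZ m ≤ Nat.gcd (fibZ m) k := Nat.sInf_le ⟨hgpos, hg⟩
    have hge : Nat.gcd (fibZ m) k ≤ fibZ m := Nat.le_of_dvd hz (Nat.gcd_dvd_left _ _)
    have : Nat.gcd (fibZ m) k = fibZ m := le_antisymm hge hle
    exact this ▸ Nat.gcd_dvd_right _ _
  · intro h
    exact hdvd.trans (Nat.fib_dvd _ _ h)

private lemma fibZ_lcm (m n : ℕ) (hm : 0 < m) (hn : 0 < n) :
    fibZ (Nat.lcm m n) = Nat.lcm (fibZ m) (fibZ n) := by
  have hl : 0 < Nat.lcm m n := Nat.pos_of_ne_zero (Nat.lcm_ne_zero hm.ne' hn.ne')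
  have key : ∀ k, Nat.lcm m n ∣ Nat.fib k ↔ Nat.lcm (fibZ m) (fibZ n) ∣ k := by
    intro k
    rw [Nat.lcm_dvd_iff, Nat.lcm_dvd_iff, dvd_fib_iff m hm, dvd_fib_iff n hn]
  apply Nat.dvd_antisymm
  · rw [← dvd_fib_iff _ hl, key]
  · rw [← key]
    exact (fibZ_mem _ hl).2

theorem ell_lcm (m n : ℕ) (hm : 0 < m) (hn : 0 < n) :
    ellF (Nat.lcm m n) = Nat.lcm (ellF m) (ellF n) := by
  unfold ellF
  rw [fibZ_lcm m n hm hn]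
  apply Nat.dvd_antisymm
  · exact Nat.lcm_dvd
      (Nat.lcm_dvd ((Nat.dvd_lcm_left m (fibZ m)).trans (Nat.dvd_lcm_left _ _))
        ((Nat.dvd_lcm_left n (fibZ n)).trans (Nat.dvd_lcm_right _ _)))
      (Nat.lcm_dvd ((Nat.dvd_lcm_right m (fibZ m)).trans (Nat.dvd_lcm_left _ _))
        ((Nat.dvd_lcm_right n (fibZ n)).trans (Nat.dvd_lcm_right _ _)))
  · exact Nat.lcm_dvd
      (Nat.lcm_dvd ((Nat.dvd_lcm_left m n).trans (Nat.dvd_lcm_left _ _))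
        ((Nat.dvd_lcm_left (fibZ m) (fibZ n)).trans (Nat.dvd_lcm_right _ _)))
      (Nat.lcm_dvd ((Nat.dvd_lcm_right m n).trans (Nat.dvd_lcm_left _ _))
        ((Nat.dvd_lcm_right (fibZ m) (fibZ n)).trans (Nat.dvd_lcm_right _ _)))
end

section
/- For every positive integer n, ℓ(n) ≤ 2n², where ℓ(n) := lcm(n, z(n)). -/
/-!
As `lcm(n, z(n)) ≤ n z(n)`, it suffices to find an index `N ≤ 2n` with `n ∣ F_N`.
Such divisibilities combine over coprime factors at a common multiple of the indices, and they
lift along prime powers: `p^k ∣ F_m` with `k ≥ 1` gives `p^(k+1) ∣ F_(pm)`. A prime `p ≠ 2, 5`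
divides `F_(p-1)` or `F_(p+1)`, an even index at most `4p/3`; because all these indices share
the factor `2`, the bound `4m/3` holds on the part `m` of `n` prime to `10`. Together with
`2^a ∣ F_(3·2^(a-1))` and `5^b ∣ F_(5^b)` this yields an index at most `(3/2)·1·(4/3)·n = 2n`.
-/

open Nat (fib)
open QuadraticAlgebra

theorem QuadraticAlgebra.omega_pow_succ {R : Type*} [CommSemiring R] (n : ℕ) :
    (ω : QuadraticAlgebra R 1 1) ^ (n + 1) = ⟨fib n, fib (n + 1)⟩ := by
  induction n with
  | zero => ext <;> simp
  | succ n ih =>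
    rw [pow_succ', ih, omega_mul_mk]
    ext <;> simp [Nat.fib_add_two]

theorem QuadraticAlgebra.im_omega_pow {R : Type*} [CommSemiring R] (n : ℕ) :
    ((ω : QuadraticAlgebra R 1 1) ^ n).im = fib n := by
  cases n with
  | zero => simp
  | succ n => simp [omega_pow_succ]

theorem add_pow_eq_pow_of_sq_eq_zero {R : Type*} [CommRing R] {x y : R} (k : ℕ)
    (hy : y ^ 2 = 0) (hky : (k : R) * y = 0) : (x + y) ^ k = x ^ k := by
  have := Polynomial.eval_add_of_sq_eq_zero (Polynomial.X ^ k) x y hy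
  simp only [Polynomial.eval_pow, Polynomial.eval_X, Polynomial.derivative_X_pow,
    Polynomial.eval_mul, Polynomial.eval_C] at this
  rw [this]
  linear_combination x ^ (k - 1) * hky

/-- In `(ZMod N)[ω]`, `ω ^ m = fib (m - 1) + fib m • ω` and the second summand squares to zero
and is killed by `k`, so `ω ^ (k * m)` is a scalar. -/
theorem dvd_fib_mul_of_dvd (N k m : ℕ) (hk : N ∣ k * fib m) (hsq : N ∣ fib m ^ 2) :
    N ∣ fib (k * m) := by
  rcases m with _ | m
  · simp
  rw [← ZMod.natCast_eq_zero_iff] at hk hsq ⊢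
  push_cast at hk hsq
  set y : QuadraticAlgebra (ZMod N) 1 1 := ⟨0, fib (m + 1)⟩
  have hy : y ^ 2 = 0 := by rw [pow_two] at hsq ⊢; ext <;> simp [y, hsq]
  have hky : (k : QuadraticAlgebra (ZMod N) 1 1) * y = 0 := by ext <;> simp [y, hk]
  have hsplit : (ω : QuadraticAlgebra (ZMod N) 1 1) ^ (m + 1) = ⟨fib m, 0⟩ + y := by
    rw [omega_pow_succ]; ext <;> simp [y]
  rw [← im_omega_pow (R := ZMod N), mul_comm, pow_mul, hsplit,
    add_pow_eq_pow_of_sq_eq_zero k hy hky, ← algebraMap_eq, ← map_pow, algebraMap_im]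

theorem pow_succ_dvd_fib_mul {p k m : ℕ} (hk : k ≠ 0) (h : p ^ k ∣ fib m) :
    p ^ (k + 1) ∣ fib (p * m) := by
  refine dvd_fib_mul_of_dvd _ _ _ (by rw [pow_succ']; exact mul_dvd_mul_left p h) ?_
  calc p ^ (k + 1) ∣ (p ^ k) ^ 2 := by rw [← pow_mul]; exact pow_dvd_pow p (by omega)
    _ ∣ fib m ^ 2 := pow_dvd_pow_of_dvd h 2

theorem pow_succ_dvd_fib_pow_mul {p m : ℕ} (h : p ∣ fib m) (j : ℕ) :
    p ^ (j + 1) ∣ fib (p ^ j * m) := by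
  induction j with
  | zero => simpa using h
  | succ j ih => rw [pow_succ' p j, mul_assoc]; exact pow_succ_dvd_fib_mul (by omega) ih

/-- With `s = 2ω - 1`, so that `s ^ 2 = 5`, the Frobenius gives `(2ω) ^ p = 1 + 5 ^ (p / 2) s`,
and `5 ^ (p / 2) = ±1` by Euler's criterion. -/
theorem Nat.Prime.dvd_fib_sub_one_or_dvd_fib_add_one {p : ℕ} (hp : p.Prime) (h2 : p ≠ 2)
    (h5 : p ≠ 5) : p ∣ fib (p - 1) ∨ p ∣ fib (p + 1) := by
  have := Fact.mk hp
  have : CharP (QuadraticAlgebra (ZMod p) 1 1) p :=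
    charP_of_injective_algebraMap algebraMap_injective p
  have : Fact (Nat.Prime 5) := ⟨by norm_num⟩
  have two_ne : (2 : ZMod p) ≠ 0 := by exact_mod_cast ZMod.prime_ne_zero p 2 h2
  have five_ne : (5 : ZMod p) ≠ 0 := by exact_mod_cast ZMod.prime_ne_zero p 5 h5
  set ε : ZMod p := 5 ^ (p / 2)
  set s : QuadraticAlgebra (ZMod p) 1 1 := 2 * ω - 1
  have hs : s ^ 2 = algebraMap (ZMod p) _ 5 := by ext <;> simp [s, pow_two] <;> norm_num
  have hsp : s ^ p = algebraMap _ _ ε * s := by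
    rw [← congrArg (s ^ ·) (Nat.two_mul_div_two_add_one_of_odd (hp.odd_of_ne_two h2)),
      pow_succ, pow_mul, hs, map_pow]
  have h2p : (2 : QuadraticAlgebra (ZMod p) 1 1) ^ p = 2 := by
    rw [← map_ofNat (algebraMap (ZMod p) _), ← map_pow, ZMod.pow_card]
  have hω : (ω : QuadraticAlgebra (ZMod p) 1 1) ^ p = ⟨fib (p - 1), fib p⟩ := by
    have := omega_pow_succ (R := ZMod p) (p - 1)
    rwa [Nat.sub_add_cancel hp.one_le] at this
  have key : 2 * ω ^ p = 1 + algebraMap _ _ ε * s := by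
    calc 2 * ω ^ p = (1 + s) ^ p := by rw [← h2p, ← mul_pow]; ring
    _ = 1 + algebraMap _ _ ε * s := by rw [add_pow_char, one_pow, hsp]
  rw [hω] at key
  have hre := congrArg re key
  have him := congrArg im key
  simp only [s, re_mul, im_mul, re_add, im_add, re_sub, im_sub, re_one, im_one, re_ofNat,
    im_ofNat, omega_re, omega_im, algebraMap_re, algebraMap_im, mul_zero, zero_mul, mul_one,
    add_zero, zero_add, sub_zero, zero_sub, mul_neg, neg_zero] at hre him
  rw [← ZMod.natCast_eq_zero_iff, ← ZMod.natCast_eq_zero_iff]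
  obtain hε | hε : ε = 1 ∨ ε = -1 := ZMod.pow_div_two_eq_neg_one_or_one p five_ne
  all_goals rw [hε] at hre him
  · left
    simpa [two_ne] using hre
  · right
    rw [Nat.fib_add_one hp.ne_zero]
    have : (2 : ZMod p) * (fib (p - 1) + fib p) = 0 := by linear_combination hre + him
    simpa [two_ne] using this

theorem Nat.Prime.exists_dvd_fib_two_mul {p : ℕ} (hp : p.Prime) (h2 : p ≠ 2) (h5 : p ≠ 5) :
    ∃ w, 0 < w ∧ p ∣ fib (2 * w) ∧ 3 * w ≤ 2 * p := by
  have hodd : p % 2 = 1 := Nat.odd_iff.mp (hp.odd_of_ne_two h2)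
  have hp3 : 3 ≤ p := by have := hp.two_le; omega
  rcases hp.dvd_fib_sub_one_or_dvd_fib_add_one h2 h5 with h | h
  · exact ⟨(p - 1) / 2, by omega, by rwa [show 2 * ((p - 1) / 2) = p - 1 by omega], by omega⟩
  · exact ⟨(p + 1) / 2, by omega, by rwa [show 2 * ((p + 1) / 2) = p + 1 by omega], by omega⟩

theorem Nat.Coprime.mul_dvd_fib {a b M N L : ℕ} (hab : a.Coprime b) (ha : a ∣ fib M)
    (hb : b ∣ fib N) (hM : M ∣ L) (hN : N ∣ L) : a * b ∣ fib L :=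
  hab.mul_dvd_of_dvd_of_dvd (ha.trans (Nat.fib_dvd M L hM)) (hb.trans (Nat.fib_dvd N L hN))

theorem exists_dvd_fib_two_mul_of_coprime_ten {m : ℕ} (hm : m.Coprime 10) (h1 : 1 < m) :
    ∃ U, 0 < U ∧ m ∣ fib (2 * U) ∧ 3 * U ≤ 2 * m := by
  induction m using Nat.recOnPosPrimePosCoprime with
  | zero => norm_num at hm
  | one => omega
  | prime_pow p e hp he =>
    have hp10 : p.Coprime 10 := Nat.Coprime.coprime_dvd_left (dvd_pow_self p he.ne') hm
    have h2 : p ≠ 2 := by rintro rfl; norm_num at hp10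
    have h5 : p ≠ 5 := by rintro rfl; norm_num at hp10
    obtain ⟨w, hw, hdvd, hle⟩ := hp.exists_dvd_fib_two_mul h2 h5
    obtain ⟨e, rfl⟩ := Nat.exists_eq_add_one.mpr he
    refine ⟨p ^ e * w, Nat.mul_pos (pow_pos hp.pos e) hw, ?_, ?_⟩
    · simpa [mul_left_comm] using pow_succ_dvd_fib_pow_mul hdvd e
    · calc 3 * (p ^ e * w) = p ^ e * (3 * w) := by ring
        _ ≤ p ^ e * (2 * p) := Nat.mul_le_mul_left _ hle
        _ = 2 * p ^ (e + 1) := by ring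
  | coprime a b ha hb hab iha ihb =>
    obtain ⟨U, hU, hUdvd, hUle⟩ := iha hm.coprime_mul_right ha
    obtain ⟨V, hV, hVdvd, hVle⟩ := ihb hm.coprime_mul_left hb
    refine ⟨U * V, by positivity, hab.mul_dvd_fib hUdvd hVdvd ⟨V, by ring⟩ ⟨U, by ring⟩, ?_⟩
    nlinarith

theorem exists_dvd_fib_of_coprime_ten {m : ℕ} (hm : m.Coprime 10) :
    ∃ N, 0 < N ∧ m ∣ fib N ∧ 3 * N ≤ 4 * m := by
  obtain rfl | rfl | h1 : m = 0 ∨ m = 1 ∨ 1 < m := by omega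
  · norm_num at hm
  · exact ⟨1, one_pos, one_dvd _, by norm_num⟩
  · obtain ⟨U, hU, hdvd, hle⟩ := exists_dvd_fib_two_mul_of_coprime_ten hm h1
    exact ⟨2 * U, by omega, hdvd, by omega⟩

theorem exists_two_pow_dvd_fib (a : ℕ) : ∃ N, 0 < N ∧ 2 ^ a ∣ fib N ∧ 2 * N ≤ 3 * 2 ^ a := by
  rcases a with _ | a
  · exact ⟨1, one_pos, by simp, by norm_num⟩
  · exact ⟨2 ^ a * 3, by positivity, pow_succ_dvd_fib_pow_mul (by decide) a, le_of_eq (by ring)⟩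

theorem five_pow_dvd_fib_five_pow (b : ℕ) : 5 ^ b ∣ fib (5 ^ b) := by
  rcases b with _ | b
  · simp
  · simpa [← pow_succ] using pow_succ_dvd_fib_pow_mul (p := 5) (m := 5) (by decide) b

theorem exists_dvd_fib_le_two_mul {n : ℕ} (hn : n ≠ 0) : ∃ N, 0 < N ∧ n ∣ fib N ∧ N ≤ 2 * n := by
  obtain ⟨a, n', h2, rfl⟩ := Nat.exists_eq_pow_mul_and_not_dvd hn 2 (by norm_num)
  obtain ⟨b, m, h5, rfl⟩ :=
    Nat.exists_eq_pow_mul_and_not_dvd (right_ne_zero_of_mul hn) 5 (by norm_num)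
  have h2m : ¬ 2 ∣ m := fun h => h2 (h.trans (dvd_mul_left m _))
  have hm : m.Coprime (2 * 5) :=
    Nat.Coprime.mul_right (Nat.prime_two.coprime_iff_not_dvd.mpr h2m).symm
      (Nat.prime_five.coprime_iff_not_dvd.mpr h5).symm
  obtain ⟨N₂, hN₂, hdvd₂, hle₂⟩ := exists_two_pow_dvd_fib a
  obtain ⟨Nₘ, hNₘ, hdvdₘ, hleₘ⟩ := exists_dvd_fib_of_coprime_ten hm
  refine ⟨N₂ * 5 ^ b * Nₘ, by positivity, ?_, ?_⟩
  · have hcop₅ : (5 ^ b).Coprime m := (Nat.prime_five.coprime_iff_not_dvd.mpr h5).pow_left b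
    have hcop₂ : (2 ^ a).Coprime (5 ^ b * m) :=
      (Nat.prime_two.coprime_iff_not_dvd.mpr h2).pow_left a
    exact hcop₂.mul_dvd_fib hdvd₂ (hcop₅.mul_dvd_fib (five_pow_dvd_fib_five_pow b) hdvdₘ
      (dvd_mul_right _ _) (dvd_mul_left _ _)) ⟨5 ^ b * Nₘ, by ring⟩ ⟨N₂, by ring⟩
  · have : 6 * (N₂ * 5 ^ b * Nₘ) ≤ 12 * (2 ^ a * (5 ^ b * m)) :=
      calc 6 * (N₂ * 5 ^ b * Nₘ) = (2 * N₂) * 5 ^ b * (3 * Nₘ) := by ring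
        _ ≤ (3 * 2 ^ a) * 5 ^ b * (4 * m) := by gcongr
        _ = 12 * (2 ^ a * (5 ^ b * m)) := by ring
    omega

theorem ell_le_two_mul_sq (n : ℕ) (hn : 0 < n) : ellF n ≤ 2 * n ^ 2 := by
  obtain ⟨N, hN, hdvd, hle⟩ := exists_dvd_fib_le_two_mul hn.ne'
  have hN' : N ∈ {k | 0 < k ∧ n ∣ fib k} := ⟨hN, hdvd⟩
  have hz : 0 < fibZ n := (Nat.sInf_mem ⟨N, hN'⟩).1
  calc ellF n ≤ n * fibZ n := Nat.lcm_le_mul hn hz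
    _ ≤ n * (2 * n) := Nat.mul_le_mul_left n ((Nat.sInf_le hN').trans hle)
    _ = 2 * n ^ 2 := by ring
end
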